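/- arXiv:1204.1873 — 2 statements merged into one kernel-verified Lean document; each statement's English description precedes it below -/
import Mathlib

section
/- (Intersecting Balls Property) Let v_1, ..., v_n be points in ℝ^m (n ≥ 1), let r_1, ..., r_n be positive reals, and let B_i = {x ∈ ℝ^m : d(x, v_i) < r_i} be the corresponding open balls. Suppose p ∈ ℝ^m is a common boundary point of all the balls, i.e., d(p, v_i) = r_i for all i. Then p ∈ conv({v_1, ..., v_n}) if and only if (⋂_{i=1}^n B_i) ∩ conv({v_1, ..., v_n}) = ∅. -/
/-!
The points strictly closer to `x` than to `p` form an open half-space, so if every `v i` is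
strictly closer to some `x` than to `p`, so is their convex hull, which therefore misses `p`.
Conversely, if `p` lies outside the hull, the nearest point `q` of the hull to `p` satisfies
`⟪p - q, y - q⟫ ≤ 0` for every `y` in the hull, hence is strictly closer than `p` to each `v i`.
-/

open Set RealInnerProductSpace

section

variable {F : Type*} [NormedAddCommGroup F] [InnerProductSpace ℝ F]

theorem convex_setOf_dist_lt_dist (x p : F) : Convex ℝ {w : F | dist x w < dist p w} := by
  have hset : {w : F | dist x w < dist p w} =
      {w | ⟪p - x, w⟫ < (‖p‖ ^ 2 - ‖x‖ ^ 2) / 2} := by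
    ext w
    simp only [mem_ofPred_eq, dist_eq_norm, inner_sub_left]
    rw [← sq_lt_sq₀ (norm_nonneg _) (norm_nonneg _), norm_sub_sq_real, norm_sub_sq_real]
    constructor <;> intro h <;> linarith
  rw [hset]
  exact convex_halfSpace_lt ⟨inner_add_right _, fun c w => real_inner_smul_right _ w c⟩ _

theorem notMem_convexHull_of_forall_dist_lt {s : Set F} {x p : F}
    (h : ∀ v ∈ s, dist x v < dist p v) : p ∉ convexHull ℝ s := fun hp => by
  have hxp : dist x p < dist p p := convexHull_min h (convex_setOf_dist_lt_dist x p) hp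
  exact (dist_nonneg.trans_lt (hxp.trans_eq (dist_self p))).false

theorem exists_forall_dist_lt_of_notMem {K : Set F} (hne : K.Nonempty) (hcomplete : IsComplete K)
    (hconv : Convex ℝ K) {p : F} (hp : p ∉ K) : ∃ q ∈ K, ∀ y ∈ K, dist q y < dist p y := by
  have : Nonempty K := hne.to_subtype
  obtain ⟨q, hqK, hq⟩ := exists_norm_eq_iInf_of_complete_convex hne hcomplete hconv p
  have hobtuse := (norm_eq_iInf_iff_real_inner_le_zero hconv hqK).mp hq
  have hpq : 0 < ‖p - q‖ := norm_sub_pos_iff.mpr fun h => hp (h ▸ hqK)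
  refine ⟨q, hqK, fun y hy => ?_⟩
  have hsq : ‖y - q‖ ^ 2 < ‖p - y‖ ^ 2 := by
    calc ‖y - q‖ ^ 2 < ‖p - q‖ ^ 2 - 2 * ⟪p - q, y - q⟫ + ‖y - q‖ ^ 2 := by
          nlinarith [hobtuse y hy]
      _ = ‖p - y‖ ^ 2 := by rw [← norm_sub_sq_real, sub_sub_sub_cancel_right]
  rw [dist_comm, dist_eq_norm, dist_eq_norm]
  exact lt_of_pow_lt_pow_left₀ 2 (norm_nonneg _) hsq

end

theorem intersecting_balls_property_general {m n : ℕ} (hn : 0 < n)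
    (v : Fin n → EuclideanSpace ℝ (Fin m)) (r : Fin n → ℝ)
    (p : EuclideanSpace ℝ (Fin m)) (hp : ∀ i, dist p (v i) = r i) :
    p ∈ convexHull ℝ (Set.range v) ↔
      (⋂ i : Fin n, Metric.ball (v i) (r i)) ∩ convexHull ℝ (Set.range v) = ∅ := by
  have hvK : ∀ i, v i ∈ convexHull ℝ (range v) := fun i => subset_convexHull ℝ _ (mem_range_self i)
  rw [← not_nonempty_iff_eq_empty]
  constructor
  · rintro hpK ⟨x, hxB, -⟩
    refine notMem_convexHull_of_forall_dist_lt (x := x) ?_ hpK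
    rintro _ ⟨i, rfl⟩
    rw [hp i]
    exact mem_iInter.mp hxB i
  · intro hempty
    by_contra hpK
    obtain ⟨q, hqK, hq⟩ := exists_forall_dist_lt_of_notMem ⟨_, hvK ⟨0, hn⟩⟩
      ((finite_range v).isCompact_convexHull ℝ).isComplete (convex_convexHull ℝ _) hpK
    exact hempty ⟨q, mem_iInter.mpr fun i => (hq _ (hvK i)).trans_eq (hp i), hqK⟩

/-- **Intersecting Balls Property**. If `p` is a common boundary point of the open balls
`B i = ball (v i) (r i)`, then `p ∈ conv({v 1, …, v n})` iff the intersection of the open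
balls misses `conv({v 1, …, v n})`. -/
theorem intersecting_balls_property {m n : ℕ} (hn : 0 < n)
    (v : Fin n → EuclideanSpace ℝ (Fin m)) (r : Fin n → ℝ) (hr : ∀ i, 0 < r i)
    (p : EuclideanSpace ℝ (Fin m)) (hp : ∀ i, dist p (v i) = r i) :
    p ∈ convexHull ℝ (Set.range v) ↔
      (⋂ i : Fin n, Metric.ball (v i) (r i)) ∩ convexHull ℝ (Set.range v) = ∅ :=
  intersecting_balls_property_general hn v r p hp
end

section
/- (General witness characterization) Let S = {v_1, ..., v_n} be a finite nonempty set of points in ℝ^m and p ∈ ℝ^m. Then p ∈ conv(S) if and only if for every point p' ∈ ℝ^m with p' ≠ p there exists v_j ∈ S such that d(p', v_j) > d(p, v_j). -/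
/-!
If `p ∈ conv S` and `p' ≠ p` were at least as close as `p` to every point of `S`, then, since
`{x | d(p', x) ≤ d(p, x)}` is a half-space and hence convex, it would contain `conv S` and so `p`,
forcing `p' = p`. Conversely, if `p ∉ conv S`, the nearest point `p'` of the compact convex set
`conv S` to `p` satisfies `⟪p - p', w - p'⟫ ≤ 0` for all `w ∈ conv S`, so `p'` is at least as
close as `p` to every vertex.
-/

open RealInnerProductSpace

variable {E : Type*} [NormedAddCommGroup E] [InnerProductSpace ℝ E]

theorem dist_le_dist_iff_inner_le (a b x : E) :
    dist a x ≤ dist b x ↔ ⟪b - a, x⟫ ≤ (‖b‖ ^ 2 - ‖a‖ ^ 2) / 2 := by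
  rw [← pow_le_pow_iff_left₀ dist_nonneg dist_nonneg two_ne_zero, dist_eq_norm, dist_eq_norm,
    norm_sub_sq_real, norm_sub_sq_real, inner_sub_left]
  constructor <;> intro h <;> linarith

theorem convex_setOf_dist_le_dist (a b : E) : Convex ℝ {x | dist a x ≤ dist b x} := by
  simp_rw [dist_le_dist_iff_inner_le a b]
  exact convex_halfSpace_le (innerₛₗ ℝ (b - a)).isLinear _

theorem dist_le_dist_of_inner_le_zero {p q w : E} (h : ⟪p - q, w - q⟫ ≤ 0) :
    dist q w ≤ dist p w := by
  have hsplit : p - w = (p - q) - (w - q) := by abel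
  rw [← pow_le_pow_iff_left₀ dist_nonneg dist_nonneg two_ne_zero, dist_comm q, dist_eq_norm,
    dist_eq_norm, hsplit, norm_sub_sq_real (p - q)]
  nlinarith [sq_nonneg ‖p - q‖]

theorem eq_of_mem_convexHull_of_forall_dist_le {s : Set E} {p q : E} (hp : p ∈ convexHull ℝ s)
    (hq : ∀ v ∈ s, dist q v ≤ dist p v) : q = p := by
  have hsub : convexHull ℝ s ⊆ {x | dist q x ≤ dist p x} :=
    convexHull_min hq (convex_setOf_dist_le_dist q p)
  have : dist q p ≤ dist p p := hsub hp
  rwa [dist_self, dist_le_zero] at this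

theorem exists_mem_forall_dist_le_dist {K : Set E} (hne : K.Nonempty) (hcomplete : IsComplete K)
    (hconv : Convex ℝ K) (p : E) : ∃ q ∈ K, ∀ w ∈ K, dist q w ≤ dist p w := by
  obtain ⟨q, hqK, hq⟩ := exists_norm_eq_iInf_of_complete_convex hne hcomplete hconv p
  exact ⟨q, hqK, fun w hw =>
    dist_le_dist_of_inner_le_zero ((norm_eq_iInf_iff_real_inner_le_zero hconv hqK).1 hq w hw)⟩

theorem Set.Finite.mem_convexHull_iff_forall_exists_dist_lt {s : Set E}
    (hs : s.Finite) (hne : s.Nonempty) (p : E) :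
    p ∈ convexHull ℝ s ↔ ∀ q, q ≠ p → ∃ v ∈ s, dist p v < dist q v := by
  refine ⟨fun hp q hqp => ?_, fun h => ?_⟩
  · by_contra! hq
    exact hqp (eq_of_mem_convexHull_of_forall_dist_le hp hq)
  · by_contra hp
    obtain ⟨q, hqK, hq⟩ := exists_mem_forall_dist_le_dist (hne.mono (subset_convexHull ℝ s))
      (hs.isCompact_convexHull ℝ).isComplete (convex_convexHull ℝ s) p
    obtain ⟨v, hvs, hv⟩ := h q (ne_of_mem_of_not_mem hqK hp)
    exact (hq v (subset_convexHull ℝ s hvs)).not_gt hv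

/-- **General witness characterization**. `p ∈ conv(S)` iff for every point `p' ≠ p` of the
ambient space there is some `v j` strictly farther from `p'` than from `p`. -/
theorem general_witness_characterization {m n : ℕ} (hn : 0 < n)
    (v : Fin n → EuclideanSpace ℝ (Fin m)) (p : EuclideanSpace ℝ (Fin m)) :
    p ∈ convexHull ℝ (Set.range v) ↔
      ∀ p' : EuclideanSpace ℝ (Fin m), p' ≠ p →
        ∃ j : Fin n, dist p' (v j) > dist p (v j) := by
  have hne : (Set.range v).Nonempty := Set.range_nonempty_iff_nonempty.2 ⟨⟨0, hn⟩⟩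
  simp only [(Set.finite_range v).mem_convexHull_iff_forall_exists_dist_lt hne,
    Set.exists_range_iff, gt_iff_lt]
end
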